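/- arXiv:2509.13173 — 11 statements merged into one kernel-verified Lean document; each statement's English description precedes it below -/
import Mathlib

section
/- Euler's cubic as the derivative of the area function: let A, C, D, E, F be real numbers with A·C > 0. For every B with B² < A·C, the function g(B) = (C·D² + A·E² − 2·B·D·E − F·(A·C − B²))/(A·C − B²)^{3/2} is differentiable at B with derivative g'(B) = (F·B³ − 4·D·E·B² + (3·C·D² + 3·A·E² − A·C·F)·B − 2·A·C·D·E)/(A·C − B²)^{5/2}. In particular the interior critical points of the area along the pencil are exactly the roots of the cubic F·B³ − 4·D·E·B² + (3·C·D² + 3·A·E² − A·C·F)·B − 2·A·C·D·E = 0 lying in (−√(A·C), √(A·C)). -/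
theorem HasDerivAt.div_rpow {f u : ℝ → ℝ} {f' u' x : ℝ} (p : ℝ) (hf : HasDerivAt f f' x)
    (hu : HasDerivAt u u' x) (hpos : 0 < u x) :
    HasDerivAt (fun y => f y / u y ^ p) ((f' * u x - p * f x * u') / u x ^ (p + 1)) x := by
  have hpow : 0 < u x ^ p := Real.rpow_pos_of_pos hpos p
  refine (hf.div (hu.rpow_const (Or.inl hpos.ne')) hpow.ne').congr_deriv ?_
  rw [Real.rpow_add_one hpos.ne', Real.rpow_sub_one hpos.ne']
  field_simp

theorem euler_cubic_is_derivative_of_area_general (A C D E F : ℝ)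
    (B : ℝ) (hB : B ^ 2 < A * C) :
    HasDerivAt
      (fun B : ℝ =>
        (C * D ^ 2 + A * E ^ 2 - 2 * B * D * E - F * (A * C - B ^ 2))
          / (A * C - B ^ 2) ^ ((3 : ℝ) / 2))
      ((F * B ^ 3 - 4 * D * E * B ^ 2 + (3 * C * D ^ 2 + 3 * A * E ^ 2 - A * C * F) * B
          - 2 * A * C * D * E) / (A * C - B ^ 2) ^ ((5 : ℝ) / 2)) B ∧
    ((F * B ^ 3 - 4 * D * E * B ^ 2 + (3 * C * D ^ 2 + 3 * A * E ^ 2 - A * C * F) * B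
          - 2 * A * C * D * E) / (A * C - B ^ 2) ^ ((5 : ℝ) / 2) = 0 ↔
      F * B ^ 3 - 4 * D * E * B ^ 2 + (3 * C * D ^ 2 + 3 * A * E ^ 2 - A * C * F) * B
          - 2 * A * C * D * E = 0) := by
  have hpos : 0 < A * C - B ^ 2 := sub_pos.mpr hB
  have hden : HasDerivAt (fun B : ℝ => A * C - B ^ 2) (-(2 * B)) B := by
    simpa using (hasDerivAt_pow 2 B).const_sub (A * C)
  have hnum : HasDerivAt (fun B : ℝ => C * D ^ 2 + A * E ^ 2 - 2 * B * D * E - F * (A * C - B ^ 2))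
      (2 * F * B - 2 * D * E) B := by
    have hlin : HasDerivAt (fun B : ℝ => 2 * B * D * E) (2 * D * E) B := by
      simpa using (((hasDerivAt_id B).const_mul 2).mul_const D).mul_const E
    exact (((hasDerivAt_const B _).sub hlin).sub (hden.const_mul F)).congr_deriv (by ring)
  have hquot := hnum.div_rpow (3 / 2) hden hpos
  rw [show (3 : ℝ) / 2 + 1 = 5 / 2 by norm_num] at hquot
  refine ⟨hquot.congr_deriv (by ring), ?_⟩
  rw [div_eq_zero_iff, or_iff_left (Real.rpow_pos_of_pos hpos _).ne']

/-- E691 §11: derivative of Euler's area expression with respect to the pencil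
parameter `B`, and the resulting characterisation of interior critical points as
roots of Euler's cubic. -/
theorem euler_cubic_is_derivative_of_area (A C D E F : ℝ) (hAC : 0 < A * C)
    (B : ℝ) (hB : B ^ 2 < A * C) :
    HasDerivAt
      (fun B : ℝ =>
        (C * D ^ 2 + A * E ^ 2 - 2 * B * D * E - F * (A * C - B ^ 2))
          / (A * C - B ^ 2) ^ ((3 : ℝ) / 2))
      ((F * B ^ 3 - 4 * D * E * B ^ 2 + (3 * C * D ^ 2 + 3 * A * E ^ 2 - A * C * F) * B
          - 2 * A * C * D * E) / (A * C - B ^ 2) ^ ((5 : ℝ) / 2)) B ∧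
    ((F * B ^ 3 - 4 * D * E * B ^ 2 + (3 * C * D ^ 2 + 3 * A * E ^ 2 - A * C * F) * B
          - 2 * A * C * D * E) / (A * C - B ^ 2) ^ ((5 : ℝ) / 2) = 0 ↔
      F * B ^ 3 - 4 * D * E * B ^ 2 + (3 * C * D ^ 2 + 3 * A * E ^ 2 - A * C * F) * B
          - 2 * A * C * D * E = 0) :=
  euler_cubic_is_derivative_of_area_general A C D E F B hB
end

section
/- Minimal ellipse circumscribing a parallelogram: let a, c > 0 and let A, B, C, D, E, F be real numbers with A > 0 and A·C − B² > 0 such that Q(x,y) = A·x² + 2B·x·y + C·y² + 2D·x + 2E·y + F vanishes at the four points (a,0), (−a,0), (0,c), (0,−c). Then the two-dimensional Lebesgue measure of {(x,y) ∈ ℝ² : Q(x,y) ≤ 0} is at least π·a·c, with equality if and only if B = 0. (Thus the minimal circumscribing ellipse has area (π/2) times the area 2·a·c of the quadrilateral with vertices (±a,0), (0,±c).) -/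
open MeasureTheory

/-! Vanishing at `(±a, 0)` and `(0, ±c)` forces `D = E = 0`, `F = -A a²` and `C c² = A a²`, so the
disk is `{A x² + 2B x y + C y² ≤ A a²}`. Completing the square,
`(A x + B y)² + (δ y)² = A (A x² + 2B x y + C y²)` with `δ = √(AC - B²)`, exhibits it as the
preimage of the unit disk under a triangular linear map, so its area is `π A a² / δ`. Finally
`(c δ)² = (A a)² - (B c)²`, hence `c δ ≤ A a`, with equality exactly when `B = 0`. -/

noncomputable def upperTriangularMap (s u t : ℝ) : ℝ × ℝ →ₗ[ℝ] ℝ × ℝ :=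
  (s • LinearMap.fst ℝ ℝ ℝ + u • LinearMap.snd ℝ ℝ ℝ).prod (t • LinearMap.snd ℝ ℝ ℝ)

@[simp]
lemma upperTriangularMap_apply (s u t : ℝ) (p : ℝ × ℝ) :
    upperTriangularMap s u t p = (s * p.1 + u * p.2, t * p.2) := rfl

lemma det_upperTriangularMap (s u t : ℝ) : LinearMap.det (upperTriangularMap s u t) = s * t := by
  rw [← LinearMap.det_toMatrix (Module.Basis.finTwoProd ℝ), Matrix.det_fin_two]
  simp [LinearMap.toMatrix_apply]

lemma volume_unitDisk : volume {p : ℝ × ℝ | p.1 ^ 2 + p.2 ^ 2 ≤ 1} = ENNReal.ofReal Real.pi := by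
  have hdisk : Complex.measurableEquivRealProd ⁻¹' {p : ℝ × ℝ | p.1 ^ 2 + p.2 ^ 2 ≤ 1}
      = Metric.closedBall (0 : ℂ) 1 := by
    ext z
    simp [Complex.measurableEquivRealProd_apply, Complex.norm_def, Complex.normSq_apply, ← sq]
  have hmeas : MeasurableSet {p : ℝ × ℝ | p.1 ^ 2 + p.2 ^ 2 ≤ 1} := by
    apply measurableSet_le <;> fun_prop
  rw [← Complex.volume_preserving_equiv_real_prod.measure_preimage hmeas.nullMeasurableSet, hdisk,
    Complex.volume_closedBall, ENNReal.ofReal_one, one_pow, one_mul, ← ENNReal.ofReal_coe_nnreal,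
    NNReal.coe_real_pi]

lemma sq_add_sq_eq_mul_quadForm {A B C δ : ℝ} (hδ : δ ^ 2 = A * C - B ^ 2) (x y : ℝ) :
    (A * x + B * y) ^ 2 + (δ * y) ^ 2 = A * (A * x ^ 2 + 2 * B * x * y + C * y ^ 2) := by
  linear_combination y ^ 2 * hδ

lemma volume_setOf_quadForm_le {A B C R : ℝ} (hA : 0 < A) (hdisc : 0 < A * C - B ^ 2)
    (hR : 0 < R) :
    volume {p : ℝ × ℝ | A * p.1 ^ 2 + 2 * B * p.1 * p.2 + C * p.2 ^ 2 ≤ R}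
      = ENNReal.ofReal (Real.pi * (R / √(A * C - B ^ 2))) := by
  set δ := √(A * C - B ^ 2)
  set k := √(A * R)
  have hδ : 0 < δ := Real.sqrt_pos.2 hdisc
  have hk : 0 < k := Real.sqrt_pos.2 (mul_pos hA hR)
  have hδ2 : δ ^ 2 = A * C - B ^ 2 := Real.sq_sqrt hdisc.le
  have hk2 : k ^ 2 = A * R := Real.sq_sqrt (mul_pos hA hR).le
  have hset : {p : ℝ × ℝ | A * p.1 ^ 2 + 2 * B * p.1 * p.2 + C * p.2 ^ 2 ≤ R}
      = upperTriangularMap (A / k) (B / k) (δ / k) ⁻¹' {p | p.1 ^ 2 + p.2 ^ 2 ≤ 1} := by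
    ext p
    have hrw : (A / k * p.1 + B / k * p.2) ^ 2 + (δ / k * p.2) ^ 2
        = (A * p.1 ^ 2 + 2 * B * p.1 * p.2 + C * p.2 ^ 2) / R :=
      calc (A / k * p.1 + B / k * p.2) ^ 2 + (δ / k * p.2) ^ 2
          = ((A * p.1 + B * p.2) ^ 2 + (δ * p.2) ^ 2) / k ^ 2 := by ring
        _ = _ := by rw [sq_add_sq_eq_mul_quadForm hδ2, hk2]; field_simp
    simp only [Set.mem_ofPred_eq, Set.mem_preimage, upperTriangularMap_apply, hrw, div_le_one hR]
  have hdet : A / k * (δ / k) = δ / R := by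
    rw [div_mul_div_comm, ← sq, hk2]
    field_simp
  rw [hset, Measure.addHaar_preimage_linearMap volume (by rw [det_upperTriangularMap]; positivity),
    det_upperTriangularMap, volume_unitDisk, hdet, abs_of_pos (by positivity), inv_div,
    ← ENNReal.ofReal_mul (by positivity), mul_comm]

lemma conic_coeffs_of_vanishing_at_rhombus {a c A B C D E F : ℝ} (ha : a ≠ 0) (hc : c ≠ 0)
    (hQ : ∀ p : ℝ × ℝ,
      (p = (a, 0) ∨ p = (-a, 0) ∨ p = (0, c) ∨ p = (0, -c)) →
      A * p.1 ^ 2 + 2 * B * p.1 * p.2 + C * p.2 ^ 2 + 2 * D * p.1 + 2 * E * p.2 + F = 0) :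
    D = 0 ∧ E = 0 ∧ F = -(A * a ^ 2) ∧ C * c ^ 2 = A * a ^ 2 := by
  have h₁ := hQ (a, 0) (by simp)
  have h₂ := hQ (-a, 0) (by simp)
  have h₃ := hQ (0, c) (by simp)
  have h₄ := hQ (0, -c) (by simp)
  simp only [ne_eq, OfNat.ofNat_ne_zero, not_false_eq_true, zero_pow, mul_zero, add_zero,
    zero_add, mul_neg, neg_sq] at h₁ h₂ h₃ h₄
  have hD : D * a = 0 := by linear_combination (h₁ - h₂) / 4
  have hE : E * c = 0 := by linear_combination (h₃ - h₄) / 4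
  refine ⟨(mul_eq_zero.1 hD).resolve_right ha, (mul_eq_zero.1 hE).resolve_right hc, ?_, ?_⟩
  · linear_combination (h₁ + h₂) / 2
  · linear_combination (h₃ + h₄ - h₁ - h₂) / 2

lemma sq_mul_sqrt_discr {a c A B C : ℝ} (hCc : C * c ^ 2 = A * a ^ 2)
    (hdisc : 0 ≤ A * C - B ^ 2) :
    (c * √(A * C - B ^ 2)) ^ 2 = (A * a) ^ 2 - (B * c) ^ 2 := by
  rw [mul_pow, Real.sq_sqrt hdisc]
  linear_combination A * hCc

lemma mul_sqrt_discr_le {a c A B C : ℝ} (ha : 0 ≤ a) (hA : 0 ≤ A) (hCc : C * c ^ 2 = A * a ^ 2)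
    (hdisc : 0 ≤ A * C - B ^ 2) : c * √(A * C - B ^ 2) ≤ A * a := by
  refine abs_le_of_sq_le_sq' ?_ (by positivity) |>.2
  rw [sq_mul_sqrt_discr hCc hdisc]
  nlinarith [sq_nonneg (B * c)]

lemma mul_sqrt_discr_eq_iff {a c A B C : ℝ} (ha : 0 ≤ a) (hc : 0 < c) (hA : 0 ≤ A)
    (hCc : C * c ^ 2 = A * a ^ 2) (hdisc : 0 ≤ A * C - B ^ 2) :
    c * √(A * C - B ^ 2) = A * a ↔ B = 0 := by
  rw [← sq_eq_sq₀ (by positivity) (by positivity), sq_mul_sqrt_discr hCc hdisc]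
  simp [hc.ne']

lemma mul_le_div_sqrt_discr {a c A B C : ℝ} (ha : 0 < a) (hc : 0 < c) (hA : 0 < A)
    (hCc : C * c ^ 2 = A * a ^ 2) (hdisc : 0 < A * C - B ^ 2) :
    a * c ≤ A * a ^ 2 / √(A * C - B ^ 2) ∧ (A * a ^ 2 / √(A * C - B ^ 2) = a * c ↔ B = 0) := by
  have hδ : 0 < √(A * C - B ^ 2) := Real.sqrt_pos.2 hdisc
  have hfactor : a * c * √(A * C - B ^ 2) = a * (c * √(A * C - B ^ 2)) := by ring
  have hsq : A * a ^ 2 = a * (A * a) := by ring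
  constructor
  · rw [le_div_iff₀ hδ, hfactor, hsq]
    exact mul_le_mul_of_nonneg_left (mul_sqrt_discr_le ha.le hA.le hCc hdisc.le) ha.le
  · rw [div_eq_iff hδ.ne', hfactor, hsq, mul_right_inj' ha.ne', eq_comm]
    exact mul_sqrt_discr_eq_iff ha.le hc hA.le hCc hdisc.le

/-- E691 §§13–15: amongst all ellipses
`{(x,y) : A·x² + 2B·x·y + C·y² + 2D·x + 2E·y + F ≤ 0}` passing through the four
vertices `(±a, 0)`, `(0, ±c)` of a parallelogram, the area is at least `π·a·c`,
with equality if and only if `B = 0`. -/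
theorem euler_min_area_parallelogram (a c A B C D E F : ℝ)
    (ha : 0 < a) (hc : 0 < c) (hA : 0 < A) (hdisc : 0 < A * C - B ^ 2)
    (hQ : ∀ p : ℝ × ℝ,
      (p = (a, 0) ∨ p = (-a, 0) ∨ p = (0, c) ∨ p = (0, -c)) →
      A * p.1 ^ 2 + 2 * B * p.1 * p.2 + C * p.2 ^ 2 + 2 * D * p.1 + 2 * E * p.2 + F = 0) :
    ENNReal.ofReal (Real.pi * a * c) ≤
      MeasureTheory.volume
        {p : ℝ × ℝ | A * p.1 ^ 2 + 2 * B * p.1 * p.2 + C * p.2 ^ 2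
          + 2 * D * p.1 + 2 * E * p.2 + F ≤ 0} ∧
    (MeasureTheory.volume
        {p : ℝ × ℝ | A * p.1 ^ 2 + 2 * B * p.1 * p.2 + C * p.2 ^ 2
          + 2 * D * p.1 + 2 * E * p.2 + F ≤ 0}
        = ENNReal.ofReal (Real.pi * a * c) ↔ B = 0) := by
  obtain ⟨rfl, rfl, rfl, hCc⟩ := conic_coeffs_of_vanishing_at_rhombus ha.ne' hc.ne' hQ
  have hset : {p : ℝ × ℝ | A * p.1 ^ 2 + 2 * B * p.1 * p.2 + C * p.2 ^ 2
        + 2 * 0 * p.1 + 2 * 0 * p.2 + -(A * a ^ 2) ≤ 0}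
      = {p : ℝ × ℝ | A * p.1 ^ 2 + 2 * B * p.1 * p.2 + C * p.2 ^ 2 ≤ A * a ^ 2} := by
    ext p
    simp only [Set.mem_ofPred_eq]
    constructor <;> intro h <;> linarith
  obtain ⟨hle, heq⟩ := mul_le_div_sqrt_discr ha hc hA hCc hdisc
  rw [hset, volume_setOf_quadForm_le hA hdisc (by positivity), mul_assoc]
  refine ⟨ENNReal.ofReal_le_ofReal (mul_le_mul_of_nonneg_left hle Real.pi_pos.le), ?_⟩
  rw [ENNReal.ofReal_eq_ofReal_iff (by positivity) (by positivity),
    mul_right_inj' Real.pi_ne_zero, heq]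
end

section
/- Steiner/Euler lower bound for circumscribed ellipses of a triangle: let p₁, p₂, p₃ ∈ ℝ² be affinely independent points, and let A, B, C, D, E, F be real numbers with A > 0 and A·C − B² > 0 such that Q(x,y) = A·x² + 2B·x·y + C·y² + 2D·x + 2E·y + F vanishes at p₁, p₂ and p₃. Then the two-dimensional Lebesgue measure of {(x,y) ∈ ℝ² : Q(x,y) ≤ 0} is at least (4π/(3·√3)) · (1/2)·|det(p₂ − p₁, p₃ − p₁)|, i.e. at least 4π/(3√3) times the area of the triangle p₁p₂p₃. -/
/-!
Completing the square writes the conic as `q (p - c) ≤ r` for the positive definite form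
`q (x, y) = A x² + 2B xy + C y²`, a region of area `π r / √(AC - B²)`, and the vertices satisfy
`q (pᵢ - c) = r`. For three points `eᵢ` on such a `q`-circle, the `q`-lengths of the sides sum to at
most `9 r`, since adding `q (e₁ + e₂ + e₃) ≥ 0` gives `3 (q e₁ + q e₂ + q e₃) = 9 r`. Weitzenböck's
inequality for `q`, `12 (AC - B²) cross² ≤ (sum of the q-lengths of the sides)²`, then bounds twice
the triangle's area `|cross|` by `(3√3 / 2) r / √(AC - B²)`.
-/

open MeasureTheory Real

def quadForm (A B C : ℝ) (p : ℝ × ℝ) : ℝ := A * p.1 ^ 2 + 2 * B * p.1 * p.2 + C * p.2 ^ 2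

def cross (u v : ℝ × ℝ) : ℝ := u.1 * v.2 - u.2 * v.1

noncomputable def conicCenter (A B C D E : ℝ) : ℝ × ℝ :=
  ((B * E - C * D) / (A * C - B ^ 2), (B * D - A * E) / (A * C - B ^ 2))

section QuadForm

variable {A B C : ℝ}

theorem quadForm_nonneg (hA : 0 < A) (hδ : 0 ≤ A * C - B ^ 2) (p : ℝ × ℝ) :
    0 ≤ quadForm A B C p := by
  have h : A * quadForm A B C p = (A * p.1 + B * p.2) ^ 2 + (A * C - B ^ 2) * p.2 ^ 2 := by
    unfold quadForm; ring
  exact nonneg_of_mul_nonneg_right (h ▸ by positivity) hA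

theorem quadForm_sub_add_quadForm_sum (e₁ e₂ e₃ : ℝ × ℝ) :
    quadForm A B C (e₂ - e₁) + quadForm A B C (e₃ - e₁) + quadForm A B C (e₂ - e₃)
      + quadForm A B C (e₁ + e₂ + e₃)
      = 3 * (quadForm A B C e₁ + quadForm A B C e₂ + quadForm A B C e₃) := by
  simp only [quadForm, Prod.fst_sub, Prod.snd_sub, Prod.fst_add, Prod.snd_add]; ring

theorem weitzenbock_quadForm (u v : ℝ × ℝ) :
    12 * (A * C - B ^ 2) * cross u v ^ 2
      ≤ (quadForm A B C u + quadForm A B C v + quadForm A B C (u - v)) ^ 2 := by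
  -- a sum of squares by Lagrange's identity `q u * q v - β(u, v)² = (AC - B²) * cross u v ^ 2`
  have h : (quadForm A B C u + quadForm A B C v + quadForm A B C (u - v)) ^ 2
      - 12 * (A * C - B ^ 2) * cross u v ^ 2
      = (quadForm A B C u + quadForm A B C v - 2 * quadForm A B C (u - v)) ^ 2
        + 3 * (quadForm A B C u - quadForm A B C v) ^ 2 := by
    simp only [quadForm, cross, Prod.fst_sub, Prod.snd_sub]; ring
  exact sub_nonneg.mp (h ▸ by positivity)

theorem inscribed_triangle_cross_sq_le (hA : 0 < A) (hδ : 0 ≤ A * C - B ^ 2)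
    {e₁ e₂ e₃ : ℝ × ℝ} {r : ℝ} (h₁ : quadForm A B C e₁ = r) (h₂ : quadForm A B C e₂ = r)
    (h₃ : quadForm A B C e₃ = r) :
    4 * (A * C - B ^ 2) * cross (e₂ - e₁) (e₃ - e₁) ^ 2 ≤ 27 * r ^ 2 := by
  set S := quadForm A B C (e₂ - e₁) + quadForm A B C (e₃ - e₁) + quadForm A B C (e₂ - e₃)
  have hS₀ : 0 ≤ S := by
    have := quadForm_nonneg hA hδ
    exact add_nonneg (add_nonneg (this _) (this _)) (this _)
  have hS : S ≤ 9 * r := by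
    linarith [quadForm_sub_add_quadForm_sum (A := A) (B := B) (C := C) e₁ e₂ e₃,
      quadForm_nonneg hA hδ (e₁ + e₂ + e₃)]
  have hW := weitzenbock_quadForm (A := A) (B := B) (C := C) (e₂ - e₁) (e₃ - e₁)
  rw [sub_sub_sub_cancel_right] at hW
  nlinarith [pow_le_pow_left₀ hS₀ hS 2]

end QuadForm

theorem volume_setOf_sq_add_sq_le (s : ℝ) :
    volume {w : ℝ × ℝ | w.1 ^ 2 + w.2 ^ 2 ≤ s} = ENNReal.ofReal (π * s) := by
  rcases lt_or_ge s 0 with hs | hs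
  · have : {w : ℝ × ℝ | w.1 ^ 2 + w.2 ^ 2 ≤ s} = ∅ := by
      ext w; simp only [Set.mem_ofPred_eq, Set.mem_empty_iff_false, iff_false, not_le]
      nlinarith [sq_nonneg w.1, sq_nonneg w.2]
    rw [this, measure_empty, ENNReal.ofReal_of_nonpos (by nlinarith [pi_pos])]
  · have hpre : Complex.measurableEquivRealProd ⁻¹' {w : ℝ × ℝ | w.1 ^ 2 + w.2 ^ 2 ≤ s}
        = Metric.closedBall (0 : ℂ) √s := by
      ext z
      rw [Set.mem_preimage, mem_closedBall_zero_iff, le_sqrt (norm_nonneg z) hs, Complex.sq_norm,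
        Complex.normSq_apply, Set.mem_ofPred_eq, Complex.measurableEquivRealProd_apply]
      simp only [sq]
    have hmeas : MeasurableSet {w : ℝ × ℝ | w.1 ^ 2 + w.2 ^ 2 ≤ s} :=
      measurableSet_le (by fun_prop) measurable_const
    rw [← Complex.volume_preserving_equiv_real_prod.measure_preimage hmeas.nullMeasurableSet,
      hpre, Complex.volume_closedBall, ← ENNReal.ofReal_pow (sqrt_nonneg _), sq_sqrt hs,
      ENNReal.ofReal_mul pi_nonneg, ← NNReal.coe_real_pi, ENNReal.ofReal_coe_nnreal, mul_comm]

theorem volume_setOf_quadForm_sub_le {A B C : ℝ} (hA : 0 < A) (hδ : 0 < A * C - B ^ 2)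
    (c : ℝ × ℝ) (r : ℝ) :
    volume {p | quadForm A B C (p - c) ≤ r} = ENNReal.ofReal (π * r / √(A * C - B ^ 2)) := by
  set T : ℝ × ℝ →ₗ[ℝ] ℝ × ℝ := Matrix.toLin (Module.Basis.finTwoProd ℝ)
    (Module.Basis.finTwoProd ℝ) !![A, B; 0, √(A * C - B ^ 2)] with hT
  have hTq : ∀ p, (T p).1 ^ 2 + (T p).2 ^ 2 = A * quadForm A B C p := fun p => by
    rw [hT, Matrix.toLin_finTwoProd_apply]
    simp only [zero_mul, zero_add, mul_pow, sq_sqrt hδ.le, quadForm]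
    ring
  have hdet : LinearMap.det T = A * √(A * C - B ^ 2) := by
    rw [hT, LinearMap.det_toLin, Matrix.det_fin_two_of]; ring
  have hset : {p | quadForm A B C (p - c) ≤ r}
      = (· + -c) ⁻¹' (T ⁻¹' {w | w.1 ^ 2 + w.2 ^ 2 ≤ A * r}) := by
    ext p
    simp only [Set.mem_preimage, Set.mem_ofPred_eq, ← sub_eq_add_neg, hTq, mul_le_mul_iff_right₀ hA]
  rw [hset, measure_preimage_add_right, Measure.addHaar_preimage_linearMap _ (hdet ▸ by positivity),
    volume_setOf_sq_add_sq_le, hdet, ← ENNReal.ofReal_mul (abs_nonneg _)]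
  congr 1
  rw [abs_of_pos (by positivity)]
  field_simp

theorem conic_eq_quadForm_sub_conicCenter {A B C : ℝ} (D E F : ℝ) (hδ : A * C - B ^ 2 ≠ 0)
    (p : ℝ × ℝ) :
    A * p.1 ^ 2 + 2 * B * p.1 * p.2 + C * p.2 ^ 2 + 2 * D * p.1 + 2 * E * p.2 + F
      = quadForm A B C (p - conicCenter A B C D E)
        - (quadForm A B C (conicCenter A B C D E) - F) := by
  simp only [quadForm, conicCenter, Prod.fst_sub, Prod.snd_sub]
  field_simp
  ring

theorem steiner_ratio_le_of_sq_le {δ r X : ℝ} (hδ : 0 < δ) (hr : 0 ≤ r)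
    (h : 4 * δ * X ^ 2 ≤ 27 * r ^ 2) : 4 * π / (3 * √3) * (1 / 2 * |X|) ≤ π * r / √δ := by
  have hX : 2 * √δ * |X| ≤ 3 * √3 * r := by
    rw [← pow_le_pow_iff_left₀ (by positivity) (by positivity) two_ne_zero]
    calc (2 * √δ * |X|) ^ 2 = 4 * δ * X ^ 2 := by rw [mul_pow, mul_pow, sq_sqrt hδ.le, sq_abs]; ring
      _ ≤ 27 * r ^ 2 := h
      _ = (3 * √3 * r) ^ 2 := by rw [mul_pow, mul_pow, sq_sqrt (by norm_num)]; ring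
  rw [div_mul_eq_mul_div, div_le_div_iff₀ (by positivity) (by positivity)]
  calc 4 * π * (1 / 2 * |X|) * √δ = π * (2 * √δ * |X|) := by ring
    _ ≤ π * (3 * √3 * r) := by gcongr
    _ = π * r * (3 * √3) := by ring

theorem steiner_euler_lower_bound_general (p₁ p₂ p₃ : ℝ × ℝ)
    (A B C D E F : ℝ) (hA : 0 < A) (hdisc : 0 < A * C - B ^ 2)
    (h1 : A * p₁.1 ^ 2 + 2 * B * p₁.1 * p₁.2 + C * p₁.2 ^ 2
      + 2 * D * p₁.1 + 2 * E * p₁.2 + F = 0)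
    (h2 : A * p₂.1 ^ 2 + 2 * B * p₂.1 * p₂.2 + C * p₂.2 ^ 2
      + 2 * D * p₂.1 + 2 * E * p₂.2 + F = 0)
    (h3 : A * p₃.1 ^ 2 + 2 * B * p₃.1 * p₃.2 + C * p₃.2 ^ 2
      + 2 * D * p₃.1 + 2 * E * p₃.2 + F = 0) :
    ENNReal.ofReal ((4 * Real.pi / (3 * Real.sqrt 3)) *
        ((1 : ℝ) / 2 * |(p₂.1 - p₁.1) * (p₃.2 - p₁.2) - (p₂.2 - p₁.2) * (p₃.1 - p₁.1)|)) ≤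
      MeasureTheory.volume
        {p : ℝ × ℝ | A * p.1 ^ 2 + 2 * B * p.1 * p.2 + C * p.2 ^ 2
          + 2 * D * p.1 + 2 * E * p.2 + F ≤ 0} := by
  set c := conicCenter A B C D E
  set r := quadForm A B C c - F
  have hQ := conic_eq_quadForm_sub_conicCenter D E F hdisc.ne'
  have hon : ∀ {p}, A * p.1 ^ 2 + 2 * B * p.1 * p.2 + C * p.2 ^ 2 + 2 * D * p.1 + 2 * E * p.2
      + F = 0 → quadForm A B C (p - c) = r := fun hp => sub_eq_zero.mp ((hQ _).symm.trans hp)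
  have key := inscribed_triangle_cross_sq_le hA hdisc.le (hon h1) (hon h2) (hon h3)
  rw [sub_sub_sub_cancel_right, sub_sub_sub_cancel_right] at key
  simp only [hQ, sub_nonpos]
  rw [volume_setOf_quadForm_sub_le hA hdisc]
  have hr : 0 ≤ r := hon h1 ▸ quadForm_nonneg hA hdisc.le _
  exact ENNReal.ofReal_le_ofReal (steiner_ratio_le_of_sq_le hdisc hr key)

/-- E692 / Steiner: any ellipse `{(x,y) : A·x² + 2B·x·y + C·y² + 2D·x + 2E·y + F ≤ 0}`
passing through three affinely independent points `p₁, p₂, p₃` has area at least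
`(4π/(3√3))` times the area of the triangle `p₁p₂p₃`. -/
theorem steiner_euler_lower_bound (p₁ p₂ p₃ : ℝ × ℝ)
    (hind : AffineIndependent ℝ ![p₁, p₂, p₃])
    (A B C D E F : ℝ) (hA : 0 < A) (hdisc : 0 < A * C - B ^ 2)
    (h1 : A * p₁.1 ^ 2 + 2 * B * p₁.1 * p₁.2 + C * p₁.2 ^ 2
      + 2 * D * p₁.1 + 2 * E * p₁.2 + F = 0)
    (h2 : A * p₂.1 ^ 2 + 2 * B * p₂.1 * p₂.2 + C * p₂.2 ^ 2
      + 2 * D * p₂.1 + 2 * E * p₂.2 + F = 0)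
    (h3 : A * p₃.1 ^ 2 + 2 * B * p₃.1 * p₃.2 + C * p₃.2 ^ 2
      + 2 * D * p₃.1 + 2 * E * p₃.2 + F = 0) :
    ENNReal.ofReal ((4 * Real.pi / (3 * Real.sqrt 3)) *
        ((1 : ℝ) / 2 * |(p₂.1 - p₁.1) * (p₃.2 - p₁.2) - (p₂.2 - p₁.2) * (p₃.1 - p₁.1)|)) ≤
      MeasureTheory.volume
        {p : ℝ × ℝ | A * p.1 ^ 2 + 2 * B * p.1 * p.2 + C * p.2 ^ 2
          + 2 * D * p.1 + 2 * E * p.2 + F ≤ 0} :=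
  steiner_euler_lower_bound_general p₁ p₂ p₃ A B C D E F hA hdisc h1 h2 h3
end

section
/- Euler's two-parameter minimisation (E692 §§6–8): let a, c > 0. For all s > 0 and all φ with 0 < φ < π, one has (a² + c²·s² − 2·a·c·s·cos φ)/(s·sin³ φ) ≥ 8·a·c/(3·√3), with equality if and only if s = a/c and φ = π/3. -/
/-!
With `t = cos φ`, the numerator is `(a - c s)² + 2 a c s (1 - t)` and
`sin³ φ = sin φ (1 - t) (1 + t)`, so the quantity splits as
`(a - c s)² / (s sin³ φ) + 2 a c / (sin φ (1 + cos φ))`. The first term is nonnegative and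
vanishes exactly at `s = a / c`. For the second, `(sin φ (1 + cos φ))² = (1 - t) (1 + t)³`, and
`27 - 16 (1 - t) (1 + t)³ = (2 t - 1)² ((2 t + 3)² + 2)` shows that this is at most `27 / 16`,
with equality only at `t = 1 / 2`, i.e. `φ = π / 3`.
-/

open Real

theorem twenty_seven_sub_sixteen_mul_one_sub_mul_one_add_pow_three (t : ℝ) :
    27 - 16 * ((1 - t) * (1 + t) ^ 3) = (2 * t - 1) ^ 2 * ((2 * t + 3) ^ 2 + 2) := by
  ring

theorem one_sub_mul_one_add_pow_three_le (t : ℝ) : (1 - t) * (1 + t) ^ 3 ≤ 27 / 16 := by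
  nlinarith [twenty_seven_sub_sixteen_mul_one_sub_mul_one_add_pow_three t, sq_nonneg (2 * t - 1),
    sq_nonneg (2 * t + 3)]

theorem one_sub_mul_one_add_pow_three_eq_iff (t : ℝ) :
    (1 - t) * (1 + t) ^ 3 = 27 / 16 ↔ t = 1 / 2 := by
  have key := twenty_seven_sub_sixteen_mul_one_sub_mul_one_add_pow_three t
  constructor
  · intro h
    have hprod : (2 * t - 1) ^ 2 * ((2 * t + 3) ^ 2 + 2) = 0 := by rw [← key, h]; norm_num
    have hpos : (2 * t + 3) ^ 2 + 2 ≠ 0 := by positivity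
    have ht : 2 * t - 1 = 0 := by simpa [hpos] using hprod
    linarith
  · rintro rfl
    norm_num

theorem sq_sin_mul_one_add_cos (φ : ℝ) :
    (sin φ * (1 + cos φ)) ^ 2 = (1 - cos φ) * (1 + cos φ) ^ 3 := by
  rw [mul_pow, sin_sq]; ring

theorem sin_mul_one_add_cos_le (φ : ℝ) : sin φ * (1 + cos φ) ≤ 3 * √3 / 4 := by
  have h3 : √3 ^ 2 = 3 := sq_sqrt (by norm_num)
  refine le_of_sq_le_sq ?_ (by positivity)
  rw [sq_sin_mul_one_add_cos]
  nlinarith [one_sub_mul_one_add_pow_three_le (cos φ)]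

theorem sin_mul_one_add_cos_eq_iff {φ : ℝ} (h0 : 0 ≤ φ) (hπ : φ ≤ π) :
    sin φ * (1 + cos φ) = 3 * √3 / 4 ↔ φ = π / 3 := by
  have h3 : √3 ^ 2 = 3 := sq_sqrt (by norm_num)
  constructor
  · intro h
    have hcos : cos φ = cos (π / 3) := by
      rw [cos_pi_div_three, ← one_sub_mul_one_add_pow_three_eq_iff, ← sq_sin_mul_one_add_cos, h,
        div_pow, mul_pow, h3]
      norm_num
    exact injOn_cos ⟨h0, hπ⟩ ⟨by positivity, by linarith [pi_pos]⟩ hcos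
  · rintro rfl
    rw [sin_pi_div_three, cos_pi_div_three]; ring

theorem add_eq_iff_of_nonneg_of_le {α : Type*} [AddCommGroup α] [PartialOrder α]
    [IsOrderedAddMonoid α] {x y m : α} (hx : 0 ≤ x) (hy : m ≤ y) :
    x + y = m ↔ x = 0 ∧ y = m := by
  rw [← sub_eq_zero, add_sub_assoc, add_eq_zero_iff_of_nonneg hx (sub_nonneg.2 hy), sub_eq_zero]

theorem euler_ratio_eq_add {a c s φ : ℝ} (hs : s ≠ 0) (hsin : sin φ ≠ 0) (hcos : 1 + cos φ ≠ 0) :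
    (a ^ 2 + c ^ 2 * s ^ 2 - 2 * a * c * s * cos φ) / (s * sin φ ^ 3)
      = (a - c * s) ^ 2 / (s * sin φ ^ 3) + 2 * a * c / (sin φ * (1 + cos φ)) := by
  field_simp
  rw [sin_sq]; ring

/-- E692 §§6–8: Euler's two-parameter minimisation. For `a, c > 0`, `s > 0` and
`0 < φ < π`, one has `(a² + c²s² − 2acs·cos φ)/(s·sin³φ) ≥ 8ac/(3√3)`, with
equality iff `s = a/c` and `φ = π/3`. -/
theorem euler_two_parameter_minimisation (a c : ℝ) (ha : 0 < a) (hc : 0 < c) :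
    ∀ s φ : ℝ, 0 < s → 0 < φ → φ < Real.pi →
      8 * a * c / (3 * Real.sqrt 3) ≤
        (a ^ 2 + c ^ 2 * s ^ 2 - 2 * a * c * s * Real.cos φ) / (s * Real.sin φ ^ 3) ∧
      ((a ^ 2 + c ^ 2 * s ^ 2 - 2 * a * c * s * Real.cos φ) / (s * Real.sin φ ^ 3)
          = 8 * a * c / (3 * Real.sqrt 3) ↔ s = a / c ∧ φ = Real.pi / 3) := by
  intro s φ hs h0 hπ
  have hsin : 0 < sin φ := sin_pos_of_pos_of_lt_pi h0 hπ
  have hcos : 0 < 1 + cos φ := by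
    linarith [cos_pi ▸ cos_lt_cos_of_nonneg_of_le_pi h0.le le_rfl hπ]
  have hbound : 8 * a * c / (3 * √3) = 2 * a * c / (3 * √3 / 4) := by field_simp; ring
  have hsquare : 0 ≤ (a - c * s) ^ 2 / (s * sin φ ^ 3) := by positivity
  have hsquare_eq : (a - c * s) ^ 2 / (s * sin φ ^ 3) = 0 ↔ s = a / c := by
    rw [div_eq_zero_iff, or_iff_left (by positivity), pow_eq_zero_iff two_ne_zero, sub_eq_zero,
      eq_div_iff hc.ne', mul_comm, eq_comm]
  have hangle : 8 * a * c / (3 * √3) ≤ 2 * a * c / (sin φ * (1 + cos φ)) := by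
    rw [hbound]
    exact div_le_div_of_nonneg_left (by positivity) (by positivity) (sin_mul_one_add_cos_le φ)
  have hangle_eq : 2 * a * c / (sin φ * (1 + cos φ)) = 8 * a * c / (3 * √3) ↔ φ = π / 3 := by
    rw [hbound, div_eq_div_iff_comm, div_left_inj' (by positivity),
      sin_mul_one_add_cos_eq_iff h0.le hπ.le]
  rw [euler_ratio_eq_add hs.ne' hsin.ne' hcos.ne']
  exact ⟨by linarith,
    (add_eq_iff_of_nonneg_of_le hsquare hangle).trans (and_congr hsquare_eq hangle_eq)⟩
end

section
/- For every φ with 0 < φ < π, one has (1 − cos φ)/sin³ φ ≥ 4/(3·√3), with equality if and only if φ = π/3. -/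
/-- E692 §8: for `0 < φ < π`, `(1 − cos φ)/sin³φ ≥ 4/(3√3)`, with equality iff
`φ = π/3`. -/
theorem euler_one_variable_minimisation :
    ∀ φ : ℝ, 0 < φ → φ < Real.pi →
      4 / (3 * Real.sqrt 3) ≤ (1 - Real.cos φ) / Real.sin φ ^ 3 ∧
      ((1 - Real.cos φ) / Real.sin φ ^ 3 = 4 / (3 * Real.sqrt 3) ↔ φ = Real.pi / 3) := by
  intro φ hφ0 hφπ
  have hs : 0 < Real.sin φ := Real.sin_pos_of_pos_of_lt_pi hφ0 hφπ
  set s := Real.sin φ with hsdef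
  set c := Real.cos φ with hcdef
  have hpyth : s ^ 2 + c ^ 2 = 1 := Real.sin_sq_add_cos_sq φ
  have hc1 : c < 1 := by nlinarith
  have h3 : Real.sqrt 3 ^ 2 = 3 := Real.sq_sqrt (by norm_num)
  have h3pos : 0 < Real.sqrt 3 := Real.sqrt_pos.mpr (by norm_num)
  have hs3 : 0 < s ^ 3 := by positivity
  -- key squared identity
  have hid : (3 * Real.sqrt 3 * (1 - c)) ^ 2 - (4 * s ^ 3) ^ 2
      = (1 - c) ^ 2 * (2 * c - 1) ^ 2 * ((2 * c + 3) ^ 2 + 2) := by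
    have hs2 : s ^ 2 = 1 - c ^ 2 := by linarith
    linear_combination (9*(1-c)^2) * h3 - 16*(s^4 + s^2*(1-c^2) + (1-c^2)^2) * hs2
  have hkey : 4 * s ^ 3 ≤ 3 * Real.sqrt 3 * (1 - c) := by
    nlinarith [hid, sq_nonneg ((1 - c) * (2 * c - 1)), sq_nonneg (2 * c + 3),
      mul_pos (mul_pos (by norm_num : (0:ℝ) < 3) h3pos) (by linarith : (0:ℝ) < 1 - c), hs3]
  constructor
  · rw [div_le_div_iff₀ (by positivity) hs3]
    linarith [hkey]
  · constructor
    · intro heq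
      rw [div_eq_div_iff hs3.ne' (by positivity : (3 * Real.sqrt 3) ≠ 0)] at heq
      -- heq : (1 - c) * (3 * √3) = 4 * s^3
      have hsq : (4 * s ^ 3) ^ 2 = (3 * Real.sqrt 3 * (1 - c)) ^ 2 := by
        rw [← heq]; ring
      have hzero : (1 - c) ^ 2 * (2 * c - 1) ^ 2 * ((2 * c + 3) ^ 2 + 2) = 0 := by
        linarith [hid]
      have hcc : c = 1 / 2 := by
        have h1 : (0:ℝ) < (1 - c) ^ 2 := pow_pos (by linarith) 2
        have h2 : (0:ℝ) < (2 * c + 3) ^ 2 + 2 := by positivity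
        have h4 : (2 * c - 1) ^ 2 = 0 := by
          by_contra h
          have h5 : (0:ℝ) < (2 * c - 1) ^ 2 := lt_of_le_of_ne (sq_nonneg _) (Ne.symm h)
          have := mul_pos (mul_pos h1 h5) h2
          linarith
        nlinarith [h4]
      have : Real.cos φ = Real.cos (Real.pi / 3) := by
        rw [Real.cos_pi_div_three, ← hcdef, hcc]
      exact Real.injOn_cos ⟨hφ0.le, hφπ.le⟩
        ⟨by linarith [Real.pi_pos], by linarith [Real.pi_pos]⟩ this
    · intro h
      subst h
      rw [hsdef, hcdef, Real.sin_pi_div_three, Real.cos_pi_div_three]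
      rw [div_eq_div_iff (by positivity : ((Real.sqrt 3 / 2) ^ 3 : ℝ) ≠ 0) (by positivity : (3 * Real.sqrt 3 : ℝ) ≠ 0)]
      linear_combination (-(Real.sqrt 3)/2) * h3
end

section
/- Euler's series for the perimeter of an ellipse: let a, b > 0, set c = √(a² + b²) and n = (a² − b²)/(a² + b²). Then ∫₀^{π/2} √(a²·sin² φ + b²·cos² φ) dφ = (π·c/(2·√2)) · (1 − Σ_{k=1}^{∞} c_k · n^{2k}), where (c_k) are Euler's perimeter-series coefficients, and the series Σ_{k=1}^{∞} c_k · n^{2k} converges. -/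
/-- Euler's perimeter-series coefficients: `c₁ = 1/16` and
`c_{k+1} = c_k · ((4k−1)·(4k+1))/((4·(k+1))²)`. (The value at `0` is irrelevant.) -/
noncomputable def eulerCoeff : ℕ → ℝ
  | 0 => 0
  | 1 => 1 / 16
  | (k + 2) =>
      eulerCoeff (k + 1) *
        ((4 * ((k : ℝ) + 1) - 1) * (4 * ((k : ℝ) + 1) + 1)) / (4 * ((k : ℝ) + 2)) ^ 2

/-!
Since `a² sin² φ + b² cos² φ = (c²/2)(1 − n cos 2φ)` with `|n| < 1`, the binomial series of
`√(1 − n cos 2φ)` converges uniformly in `φ` and can be integrated termwise. After `x = 2φ`, the odd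
powers of `cos` integrate to zero over `[0, π]`, and for the even ones the Wallis recursion
`∫ cos^(k+2) = (k+1)/(k+2) ∫ cos^k` together with the recursion of the binomial coefficients of
`1/2` produces exactly Euler's factor `(4k−1)(4k+1)/(4(k+1))²`, whence
`choose (1/2) (2k) · ∫₀^π cos^(2k) = −π c_k`.
-/

open Real intervalIntegral

theorem Ring.choose_succ_eq_mul_div {K : Type*} [Field K] [CharZero K] (a : K) (k : ℕ) :
    Ring.choose a (k + 1) = Ring.choose a k * (a - k) / (k + 1) := by
  rw [Ring.choose_eq_smul, Ring.choose_eq_smul, descPochhammer_succ_right]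
  simp [Polynomial.smeval_mul, Nat.factorial_succ, Polynomial.smeval_natCast]
  field_simp

theorem Real.hasSum_choose_mul_pow {a x : ℝ} (hx : |x| < 1) :
    HasSum (fun k => Ring.choose a k * x ^ k) ((1 + x) ^ a) := by
  have := (one_add_rpow_hasFPowerSeriesOnBall_zero (a := a)).hasSum (y := x)
    (by simpa [enorm_eq_nnnorm, ← NNReal.coe_lt_one] using hx)
  simpa [binomialSeries, FormalMultilinearSeries.ofScalars_apply_eq, mul_comm] using this

theorem Real.summable_norm_choose_mul_pow {a r : ℝ} (hr₀ : 0 ≤ r) (hr : r < 1) :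
    Summable (fun k => ‖Ring.choose a k‖ * r ^ k) := by
  have := (binomialSeries ℝ a).summable_norm_apply (x := r)
    (binomialSeries_radius_ge_one.trans_lt'
      (by simpa [enorm_eq_nnnorm, ← NNReal.coe_lt_one, abs_of_nonneg hr₀] using hr))
  simpa [binomialSeries, FormalMultilinearSeries.ofScalars_apply_eq, abs_of_nonneg hr₀, mul_comm]
    using this

theorem intervalIntegral.hasSum_integral_pow_of_hasSum {c : ℕ → ℝ} {f g : ℝ → ℝ} {r a b : ℝ}
    (hc : Summable fun k => ‖c k‖ * r ^ k)
    (hf : ∀ y, |y| ≤ r → HasSum (fun k => c k * y ^ k) (f y))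
    (hg : Continuous g) (hgr : ∀ x, |g x| ≤ r) :
    HasSum (fun k => c k * ∫ x in a..b, g x ^ k) (∫ x in a..b, f (g x)) := by
  simp_rw [← integral_const_mul]
  refine hasSum_integral_of_dominated_convergence (fun k _ => ‖c k‖ * r ^ k)
    (fun k => by fun_prop) (fun k => .of_forall fun x _ => ?_) (.of_forall fun _ _ => hc)
    intervalIntegrable_const (.of_forall fun x _ => hf _ (hgr x))
  rw [norm_mul, norm_pow, Real.norm_eq_abs]
  gcongr
  exact hgr x

theorem integral_cos_two_mul_pow (k : ℕ) :
    ∫ x in (0)..(π / 2), cos (2 * x) ^ k = (∫ x in (0)..π, cos x ^ k) / 2 := by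
  rw [integral_comp_mul_left (fun x => cos x ^ k) two_ne_zero]
  field_simp
  simp

theorem integral_cos_pow_add_two_zero_pi (k : ℕ) :
    ∫ x in (0)..π, cos x ^ (k + 2) = (k + 1) / (k + 2) * ∫ x in (0)..π, cos x ^ k := by
  simp [integral_cos_pow]

theorem integral_cos_pow_odd_zero_pi (m : ℕ) : ∫ x in (0)..π, cos x ^ (2 * m + 1) = 0 := by
  induction m with
  | zero => simp
  | succ m ih =>
    rw [show 2 * (m + 1) + 1 = 2 * m + 1 + 2 by ring, integral_cos_pow_add_two_zero_pi, ih,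
      mul_zero]

theorem choose_half_mul_integral_cos_pow_add_two (k : ℕ) :
    Ring.choose (1 / 2 : ℝ) (k + 2) * ∫ x in (0)..π, cos x ^ (k + 2)
      = Ring.choose (1 / 2 : ℝ) k * (∫ x in (0)..π, cos x ^ k) *
          ((2 * k - 1) * (2 * k + 1) / (4 * (k + 2) ^ 2)) := by
  rw [integral_cos_pow_add_two_zero_pi, Ring.choose_succ_eq_mul_div, Ring.choose_succ_eq_mul_div]
  push_cast
  field_simp
  ring

theorem choose_half_mul_integral_cos_pow_even (m : ℕ) :
    Ring.choose (1 / 2 : ℝ) (2 * (m + 1)) * ∫ x in (0)..π, cos x ^ (2 * (m + 1))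
      = -π * eulerCoeff (m + 1) := by
  induction m with
  | zero =>
    rw [choose_half_mul_integral_cos_pow_add_two 0]
    norm_num [eulerCoeff]
  | succ m ih =>
    rw [show 2 * (m + 1 + 1) = 2 * (m + 1) + 2 by ring, choose_half_mul_integral_cos_pow_add_two,
      ih, eulerCoeff]
    push_cast
    ring

theorem HasSum.even_of_odd_eq_zero {M : Type*} [AddCommMonoid M] [TopologicalSpace M]
    {f : ℕ → M} {a : M} (hf : HasSum f a) (hodd : ∀ m, f (2 * m + 1) = 0) :
    HasSum (fun m => f (2 * m)) a := by
  refine ((mul_right_injective₀ two_ne_zero).hasSum_iff fun k hk => ?_).mpr hf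
  obtain ⟨m, rfl⟩ : Odd k := Nat.not_even_iff_odd.mp fun ⟨m, hm⟩ => hk ⟨m, by dsimp only; omega⟩
  exact hodd m

theorem hasSum_integral_sqrt_one_sub_mul_cos_two_mul {n : ℝ} (hn : |n| < 1) :
    HasSum (fun k => Ring.choose (1 / 2 : ℝ) k * ((-n) ^ k * ((∫ x in (0)..π, cos x ^ k) / 2)))
      (∫ φ in (0)..(π / 2), √(1 - n * cos (2 * φ))) := by
  have := hasSum_integral_pow_of_hasSum (a := 0) (b := π / 2)
    (c := Ring.choose (1 / 2 : ℝ)) (f := fun y => √(1 + y))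
    (summable_norm_choose_mul_pow (abs_nonneg n) hn)
    (fun y hy => by
      simpa [sqrt_eq_rpow] using hasSum_choose_mul_pow (a := 1 / 2) (hy.trans_lt hn))
    (by fun_prop : Continuous fun φ => -n * cos (2 * φ))
    (fun φ => by
      simpa [abs_mul] using mul_le_of_le_one_right (abs_nonneg n) (abs_cos_le_one (2 * φ)))
  simp only [mul_pow, integral_const_mul, integral_cos_two_mul_pow] at this
  simpa only [neg_mul, ← sub_eq_add_neg] using this

theorem hasSum_eulerCoeff_mul_pow {n : ℝ} (hn : |n| < 1) :
    HasSum (fun k => eulerCoeff (k + 1) * n ^ (2 * (k + 1)))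
      (1 - 2 / π * ∫ φ in (0)..(π / 2), √(1 - n * cos (2 * φ))) := by
  set S := ∫ φ in (0)..(π / 2), √(1 - n * cos (2 * φ))
  set T : ℕ → ℝ := fun k =>
    Ring.choose (1 / 2 : ℝ) k * ((-n) ^ k * ((∫ x in (0)..π, cos x ^ k) / 2))
  have hT : HasSum (fun m => T (2 * (m + 1))) (S - π / 2) := by
    have hTeven : HasSum (fun m => T (2 * m)) S :=
      (hasSum_integral_sqrt_one_sub_mul_cos_two_mul hn).even_of_odd_eq_zero
        fun m => by simp [integral_cos_pow_odd_zero_pi]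
    have hT0 : T 0 = π / 2 := by simp [T]
    simpa only [Finset.sum_range_one, mul_zero, hT0] using (hasSum_nat_add_iff' 1).mpr hTeven
  have hTsucc (m : ℕ) :
      T (2 * (m + 1)) = -(π / 2) * (eulerCoeff (m + 1) * n ^ (2 * (m + 1))) := by
    simp only [T, (even_two_mul (m + 1)).neg_pow]
    linear_combination n ^ (2 * (m + 1)) / 2 * choose_half_mul_integral_cos_pow_even m
  have hπ : π ≠ 0 := pi_ne_zero
  have hvalue : 1 - 2 / π * S = -2 / π * (S - π / 2) := by
    field_simp
    ring
  refine hvalue ▸ (hT.mul_left (-2 / π)).congr_fun fun m => ?_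
  rw [hTsucc]
  field_simp

theorem abs_sq_sub_sq_div_sq_add_sq_lt_one {a b : ℝ} (ha : a ≠ 0) (hb : b ≠ 0) :
    |(a ^ 2 - b ^ 2) / (a ^ 2 + b ^ 2)| < 1 := by
  have ha2 : 0 < a ^ 2 := sq_pos_of_ne_zero ha
  have hb2 : 0 < b ^ 2 := sq_pos_of_ne_zero hb
  have hab : 0 < a ^ 2 + b ^ 2 := by linarith
  rw [abs_div, abs_of_pos hab, div_lt_one hab, abs_lt]
  constructor <;> linarith

theorem sqrt_sq_mul_sin_sq_add_sq_mul_cos_sq (a b φ : ℝ) :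
    √(a ^ 2 * sin φ ^ 2 + b ^ 2 * cos φ ^ 2)
      = √(a ^ 2 + b ^ 2) / √2 * √(1 - (a ^ 2 - b ^ 2) / (a ^ 2 + b ^ 2) * cos (2 * φ)) := by
  rcases (add_nonneg (sq_nonneg a) (sq_nonneg b)).eq_or_lt with h | h
  · rw [← h]
    have ha : a = 0 := by nlinarith [sq_nonneg a, sq_nonneg b]
    have hb : b = 0 := by nlinarith [sq_nonneg a, sq_nonneg b]
    simp [ha, hb]
  rw [← sqrt_div h.le, ← sqrt_mul (by positivity), cos_two_mul, sin_sq]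
  congr 1
  field_simp
  ring

/-- E563 §4: Euler's series for the quarter-perimeter of the ellipse with semiaxes
`a, b > 0`: with `c = √(a²+b²)` and `n = (a²−b²)/(a²+b²)`,
`∫₀^{π/2} √(a²sin²φ + b²cos²φ) dφ = (πc/(2√2))·(1 − Σ_{k≥1} c_k n^{2k})`,
the series being convergent. -/
theorem euler_perimeter_series (a b : ℝ) (ha : 0 < a) (hb : 0 < b)
    (c n : ℝ) (hc : c = Real.sqrt (a ^ 2 + b ^ 2))
    (hn : n = (a ^ 2 - b ^ 2) / (a ^ 2 + b ^ 2)) :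
    (Summable fun k : ℕ => eulerCoeff (k + 1) * n ^ (2 * (k + 1))) ∧
    ∫ φ in (0 : ℝ)..(Real.pi / 2),
        Real.sqrt (a ^ 2 * Real.sin φ ^ 2 + b ^ 2 * Real.cos φ ^ 2)
      = (Real.pi * c / (2 * Real.sqrt 2)) *
          (1 - ∑' k : ℕ, eulerCoeff (k + 1) * n ^ (2 * (k + 1))) := by
  subst hc hn
  have hsum := hasSum_eulerCoeff_mul_pow (abs_sq_sub_sq_div_sq_add_sq_lt_one ha.ne' hb.ne')
  refine ⟨hsum.summable, ?_⟩
  simp_rw [hsum.tsum_eq, sqrt_sq_mul_sin_sq_add_sq_mul_cos_sq a b, integral_const_mul]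
  field_simp
  ring
end

section
/- Euler's infinite product: π/(2·√2) = ∏_{k=1}^{∞} (4k)²/((4k − 1)·(4k + 1)), i.e. π/(2√2) = (4·4/(3·5)) · (8·8/(7·9)) · (12·12/(11·13)) · ⋯, where the infinite product is the limit of its partial products (equivalently, the product ∏_{k=1}^{∞} (1 + 1/(16k² − 1)) converges to π/(2√2)). -/
/-!
Euler's sine product `sin (π x) = π x ∏ (1 - x² / k²)` inverts to
`∏ (1 - x² / k²)⁻¹ → π x / sin (π x)`; at `x = 1/4` the factors are `16k² / (16k² - 1)` and the
limit is `(π/4) / (√2/2) = π / (2√2)`.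
-/

open Filter Real Finset Topology

theorem tendsto_prod_inv_one_sub_sq_div_sq {x : ℝ} (hx : sin (π * x) ≠ 0) :
    Tendsto (fun N : ℕ => ∏ k ∈ range N, (1 - x ^ 2 / ((k : ℝ) + 1) ^ 2)⁻¹) atTop
      (𝓝 (π * x / sin (π * x))) := by
  have hπx : π * x ≠ 0 := fun h => hx (by rw [h, sin_zero])
  convert ((tendsto_euler_sin_prod x).inv₀ hx).const_mul (π * x) using 1
  · ext N
    rw [prod_inv_distrib, mul_inv, ← mul_assoc, mul_inv_cancel₀ hπx, one_mul]
  · rw [div_eq_mul_inv]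

theorem sq_div_mul_eq_inv_one_sub {y : ℝ} (hy : y ≠ 0) :
    (4 * y) ^ 2 / ((4 * y - 1) * (4 * y + 1)) = (1 - (1 / 4) ^ 2 / y ^ 2)⁻¹ := by
  rw [one_sub_div (pow_ne_zero 2 hy), inv_div,
    ← mul_div_mul_left (y ^ 2) (y ^ 2 - (1 / 4) ^ 2) (by norm_num : (16 : ℝ) ≠ 0)]
  congr 1 <;> ring

theorem pi_mul_quarter_div_sin : π * (1 / 4) / sin (π * (1 / 4)) = π / (2 * √2) := by
  rw [← div_eq_mul_one_div, sin_pi_div_four]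
  field_simp
  norm_num

/-- E563 §5: Euler's infinite product
`π/(2√2) = (4·4/(3·5))·(8·8/(7·9))·(12·12/(11·13))·⋯`, understood as the limit of
the partial products. -/
theorem euler_infinite_product :
    Filter.Tendsto
      (fun N : ℕ => ∏ k ∈ Finset.range N,
        (4 * ((k : ℝ) + 1)) ^ 2 / ((4 * ((k : ℝ) + 1) - 1) * (4 * ((k : ℝ) + 1) + 1)))
      Filter.atTop (nhds (Real.pi / (2 * Real.sqrt 2))) := by
  have hsin : sin (π * (1 / 4)) ≠ 0 := by
    rw [← div_eq_mul_one_div, sin_pi_div_four]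
    positivity
  have h := tendsto_prod_inv_one_sub_sq_div_sq hsin
  rw [pi_mul_quarter_div_sin] at h
  refine h.congr fun N => prod_congr rfl fun k _ => ?_
  rw [sq_div_mul_eq_inv_one_sub (by positivity)]
end

section
/- Euler's finite differential equation between the rectangle and the minimal-perimeter ellipse (E563 Problem 3): let z : (0,1) → ℝ be differentiable and satisfy the Riccati equation z'(x) = x/(4·(1 − x²)) + z(x)²/x for all x ∈ (0,1), and suppose 1 + x² − 2·(1 − x²)·z(x) ≠ 0 for all x ∈ (0,1). Define i : (0,1) → ℝ by i(x) = (2·x² − 2·(1 − x²)·z(x))/(x·(1 + x² − 2·(1 − x²)·z(x))). Then i is differentiable on (0,1) and for all x ∈ (0,1): −2·x·(1 − x²)²·i'(x) = −7·x + 3·x³ + 2·i(x)·(1 + 3·x²) + i(x)²·x·(1 − 5·x²). -/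
/-! The quotient rule expresses `i'` through `x`, `z(x)` and `z'(x)`, the latter only in the
combination `x(1 − x²)z'`. The Riccati equation turns this into `x²/4 + (1 − x²)z²`, after which
Euler's equation is a rational identity in `x` and `z(x)`, checked by clearing denominators. -/

/-- Euler's `i`, the shape `(f² − g²)/(f² + g²)` of the rectangle, as a function of `x`. -/
noncomputable def rectangleShape (z : ℝ → ℝ) (x : ℝ) : ℝ :=
  (2 * x ^ 2 - 2 * (1 - x ^ 2) * z x) / (x * (1 + x ^ 2 - 2 * (1 - x ^ 2) * z x))

theorem hasDerivAt_rectangleShape {z : ℝ → ℝ} {x z' : ℝ} (hz : HasDerivAt z z' x)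
    (hx : x ≠ 0) (hD : 1 + x ^ 2 - 2 * (1 - x ^ 2) * z x ≠ 0) :
    HasDerivAt (rectangleShape z)
      (2 * (1 - x ^ 2) * (x ^ 2 + (1 + 3 * x ^ 2) * z x - 2 * (1 - x ^ 2) * z x ^ 2
          - x * (1 - x ^ 2) * z')
        / (x * (1 + x ^ 2 - 2 * (1 - x ^ 2) * z x)) ^ 2) x := by
  have hsq : HasDerivAt (fun x : ℝ => x ^ 2) (2 * x) x := by
    simpa using hasDerivAt_pow 2 x
  have hu : HasDerivAt (fun x => 2 * (1 - x ^ 2) * z x)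
      (2 * (-(2 * x) * z x + (1 - x ^ 2) * z')) x := by
    simpa only [mul_assoc] using ((hsq.const_sub 1).fun_mul hz).const_mul 2
  have hN : HasDerivAt (fun x => 2 * x ^ 2 - 2 * (1 - x ^ 2) * z x) _ x :=
    (hsq.const_mul 2).fun_sub hu
  have hD' : HasDerivAt (fun x => x * (1 + x ^ 2 - 2 * (1 - x ^ 2) * z x)) _ x :=
    (hasDerivAt_id' x).fun_mul ((hsq.const_add 1).fun_sub hu)
  refine (hN.fun_div hD' (mul_ne_zero hx hD)).congr_deriv ?_
  field_simp
  ring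

theorem euler_identity_of_riccati {x w z' i : ℝ} (hx : x ≠ 0) (hx1 : 1 - x ^ 2 ≠ 0)
    (hD : 1 + x ^ 2 - 2 * (1 - x ^ 2) * w ≠ 0)
    (hz' : z' = x / (4 * (1 - x ^ 2)) + w ^ 2 / x)
    (hi : i = (2 * x ^ 2 - 2 * (1 - x ^ 2) * w) / (x * (1 + x ^ 2 - 2 * (1 - x ^ 2) * w))) :
    -2 * x * (1 - x ^ 2) ^ 2 *
        (2 * (1 - x ^ 2) * (x ^ 2 + (1 + 3 * x ^ 2) * w - 2 * (1 - x ^ 2) * w ^ 2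
          - x * (1 - x ^ 2) * z')
        / (x * (1 + x ^ 2 - 2 * (1 - x ^ 2) * w)) ^ 2)
      = -7 * x + 3 * x ^ 3 + 2 * i * (1 + 3 * x ^ 2) + i ^ 2 * x * (1 - 5 * x ^ 2) := by
  subst hz' hi
  field_simp
  ring

/-- E563, Problem 3: if `z` satisfies the Riccati equation
`z'(x) = x/(4(1−x²)) + z(x)²/x` on `(0,1)` and
`i(x) = (2x² − 2(1−x²)z(x))/(x(1 + x² − 2(1−x²)z(x)))`, then `i` is
differentiable on `(0,1)` and satisfies Euler's finite differential equation
`−2x(1−x²)² i'(x) = −7x + 3x³ + 2i(x)(1+3x²) + i(x)²·x·(1−5x²)`. -/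
theorem euler_finite_differential_equation (z : ℝ → ℝ)
    (hz : ∀ x ∈ Set.Ioo (0 : ℝ) 1,
      HasDerivAt z (x / (4 * (1 - x ^ 2)) + (z x) ^ 2 / x) x)
    (hne : ∀ x ∈ Set.Ioo (0 : ℝ) 1, 1 + x ^ 2 - 2 * (1 - x ^ 2) * z x ≠ 0) :
    ∀ x ∈ Set.Ioo (0 : ℝ) 1,
      DifferentiableAt ℝ
        (fun x => (2 * x ^ 2 - 2 * (1 - x ^ 2) * z x)
          / (x * (1 + x ^ 2 - 2 * (1 - x ^ 2) * z x))) x ∧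
      -2 * x * (1 - x ^ 2) ^ 2 *
          deriv (fun x => (2 * x ^ 2 - 2 * (1 - x ^ 2) * z x)
            / (x * (1 + x ^ 2 - 2 * (1 - x ^ 2) * z x))) x
        = -7 * x + 3 * x ^ 3
          + 2 * ((2 * x ^ 2 - 2 * (1 - x ^ 2) * z x)
              / (x * (1 + x ^ 2 - 2 * (1 - x ^ 2) * z x))) * (1 + 3 * x ^ 2)
          + ((2 * x ^ 2 - 2 * (1 - x ^ 2) * z x)
              / (x * (1 + x ^ 2 - 2 * (1 - x ^ 2) * z x))) ^ 2 * x * (1 - 5 * x ^ 2) := by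
  intro x hx
  have hx0 : x ≠ 0 := hx.1.ne'
  have hx1 : 1 - x ^ 2 ≠ 0 := by nlinarith [hx.1, hx.2]
  have hD := hne x hx
  have hi := hasDerivAt_rectangleShape (hz x hx) hx0 hD
  refine ⟨hi.differentiableAt, ?_⟩
  erw [hi.deriv]
  exact euler_identity_of_riccati hx0 hx1 hD rfl rfl
end

section
/- Differential equation for Euler's perimeter series: the function s : (−1,1) → ℝ defined by s(x) = 1 − Σ_{k=1}^{∞} c_k · x^{2k}, where (c_k) are Euler's perimeter-series coefficients, is twice differentiable on (−1,1) and satisfies 4·x·s''(x) + 4·s'(x) + x·s(x)/(1 − x²) = 0 for all x ∈ (−1,1). -/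
/-- Euler's perimeter series `s(x) = 1 − Σ_{k≥1} c_k x^{2k}`. -/
noncomputable def eulerSeries (x : ℝ) : ℝ :=
  1 - ∑' k : ℕ, eulerCoeff (k + 1) * x ^ (2 * (k + 1))

/-!
Writing `t = x²`, Euler's series is `s(x) = F(x²)` with `F(t) = 1 - ∑ cₖ tᵏ`. The coefficients of `F`
satisfy `(n + 1)(n + γ) aₙ₊₁ = (n + α)(n + β) aₙ` with `α = -1/4`, `β = 1/4`, `γ = 1`, so `F` is the
hypergeometric series `₂F₁(-1/4, 1/4; 1; t)`. They are bounded, so `F` can be differentiated termwise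
on `(-1, 1)`, and the recurrence is, coefficient by coefficient, the hypergeometric equation
`t(1 - t)F'' + (γ - (α + β + 1)t)F' - αβF = 0`. The chain rule turns this equation for `F` into the
stated one for `s`.
-/

open Set

def derivCoeff (a : ℕ → ℝ) (n : ℕ) : ℝ := (n + 1) * a (n + 1)

def AbsSummableOnUnitInterval (a : ℕ → ℝ) : Prop :=
  ∀ r : ℝ, 0 ≤ r → r < 1 → Summable fun n => |a n| * r ^ n

namespace AbsSummableOnUnitInterval

variable {a : ℕ → ℝ}

theorem of_abs_le {C : ℝ} (h : ∀ n, |a n| ≤ C) : AbsSummableOnUnitInterval a := fun r hr0 hr1 =>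
  Summable.of_nonneg_of_le (fun n => by positivity) (fun n => by gcongr; exact h n)
    ((summable_geometric_of_lt_one hr0 hr1).mul_left C)

theorem summable (ha : AbsSummableOnUnitInterval a) {t : ℝ} (ht : |t| < 1) :
    Summable fun n => a n * t ^ n :=
  .of_norm <| (ha |t| (abs_nonneg t) ht).congr fun n => by rw [norm_mul, norm_pow]; rfl

theorem derivCoeff (ha : AbsSummableOnUnitInterval a) :
    AbsSummableOnUnitInterval (derivCoeff a) := by
  intro r hr0 hr1
  obtain ⟨s, hrs, hs1⟩ := exists_between hr1
  have hs0 : 0 < s := hr0.trans_lt hrs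
  have hq : |r / s| < 1 := by rwa [abs_of_nonneg (by positivity), div_lt_one hs0]
  obtain ⟨B, hB⟩ : ∃ B, ∀ n : ℕ, ((n : ℝ) + 1) * (r / s) ^ n ≤ B := by
    obtain ⟨B, hB⟩ := ((tendsto_self_mul_const_pow_of_abs_lt_one hq).add
      (tendsto_pow_atTop_nhds_zero_of_abs_lt_one hq)).bddAbove_range
    exact ⟨B, fun n => by simpa [add_mul] using hB ⟨n, rfl⟩⟩
  have hsum : Summable fun n => |a (n + 1)| * s ^ (n + 1) :=
    (summable_nat_add_iff 1).mpr (ha s hs0.le hs1)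
  refine .of_nonneg_of_le (fun n => by positivity) (fun n => ?_) (hsum.mul_right (B / s))
  calc |_root_.derivCoeff a n| * r ^ n
      = |a (n + 1)| * s ^ (n + 1) * (((n : ℝ) + 1) * (r / s) ^ n / s) := by
        rw [_root_.derivCoeff, abs_mul, abs_of_nonneg (by positivity : (0:ℝ) ≤ n + 1), div_pow]
        field_simp
        ring
    _ ≤ |a (n + 1)| * s ^ (n + 1) * (B / s) := by gcongr; exact hB n

theorem hasDerivAt_tsum (ha : AbsSummableOnUnitInterval a) {x : ℝ} (hx : |x| < 1) :
    HasDerivAt (fun y => ∑' n, a n * y ^ n) (∑' n, _root_.derivCoeff a n * x ^ n) x := by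
  obtain ⟨r, hxr, hr1⟩ := exists_between hx
  have hmem : x ∈ Ioo (-r) r := abs_lt.mp hxr
  -- Differentiating `∑ a (n + 1) y ^ (n + 1)` avoids the truncated exponent `n - 1`.
  have hshift : HasDerivAt (fun y => ∑' n, a (n + 1) * y ^ (n + 1))
      (∑' n, _root_.derivCoeff a n * x ^ n) x :=
    hasDerivAt_tsum_of_isPreconnected (ha.derivCoeff r ((abs_nonneg x).trans hxr.le) hr1)
      isOpen_Ioo (convex_Ioo (-r) r).isPreconnected
      (g' := fun n y => _root_.derivCoeff a n * y ^ n)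
      (fun n y _ => ((hasDerivAt_pow (n + 1) y).const_mul (a (n + 1))).congr_deriv <| by
        simp only [_root_.derivCoeff, Nat.add_sub_cancel, Nat.cast_succ]
        ring)
      (fun n y hy => by
        rw [norm_mul, norm_pow, Real.norm_eq_abs, Real.norm_eq_abs]
        gcongr
        exact (abs_lt.mpr hy).le)
      hmem ((summable_nat_add_iff 1).mpr (ha.summable hx)) hmem
  refine (hshift.const_add (a 0)).congr_of_eventuallyEq ?_
  filter_upwards [isOpen_Ioo.mem_nhds (abs_lt.mp hx)] with y hy
  simpa using (ha.summable (abs_lt.mpr hy)).tsum_eq_zero_add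

end AbsSummableOnUnitInterval

theorem HasSum.mul_pow_of_succ {f : ℕ → ℝ} (hf0 : f 0 = 0) {t s : ℝ}
    (h : HasSum (fun n => f (n + 1) * t ^ n) s) : HasSum (fun n => f n * t ^ n) (t * s) := by
  have h' : HasSum (fun n => f (n + 1) * t ^ (n + 1)) (t * s) := by
    simpa only [pow_succ', mul_left_comm] using h.mul_left t
  refine (hasSum_nat_add_iff' 1).mp ?_
  simpa [hf0] using h'

theorem hypergeometric_ode_of_hasSum {a : ℕ → ℝ} {α β γ t g g' g'' : ℝ}
    (hrec : ∀ n : ℕ, (n + 1) * (n + γ) * a (n + 1) = (n + α) * (n + β) * a n)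
    (h : HasSum (fun n => a n * t ^ n) g)
    (h' : HasSum (fun n => derivCoeff a n * t ^ n) g')
    (h'' : HasSum (fun n => derivCoeff (derivCoeff a) n * t ^ n) g'') :
    t * (1 - t) * g'' + (γ - (α + β + 1) * t) * g' - α * β * g = 0 := by
  have ht' : HasSum (fun n => n * a n * t ^ n) (t * g') :=
    .mul_pow_of_succ (by simp) (by simpa [derivCoeff] using h')
  have ht'' : HasSum (fun n => n * derivCoeff a n * t ^ n) (t * g'') :=
    .mul_pow_of_succ (by simp) (by simpa [derivCoeff] using h'')
  have htt'' : HasSum (fun n => n * (n - 1) * a n * t ^ n) (t * (t * g'')) :=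
    .mul_pow_of_succ (by simp) (by convert ht'' using 3 with n; simp [derivCoeff]; ring)
  have hsum := (((ht''.sub htt'').add (h'.mul_left γ)).sub (ht'.mul_left (α + β + 1))).sub
    (h.mul_left (α * β))
  have hzero : ∀ n : ℕ, n * derivCoeff a n * t ^ n - n * (n - 1) * a n * t ^ n
      + γ * (derivCoeff a n * t ^ n) - (α + β + 1) * (n * a n * t ^ n) - α * β * (a n * t ^ n) = 0 :=
    fun n => by rw [derivCoeff]; linear_combination t ^ n * hrec n
  simp only [hzero] at hsum
  linear_combination -hasSum_zero.unique hsum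

theorem eulerCoeff_succ_mem_Icc (k : ℕ) : eulerCoeff (k + 1) ∈ Icc 0 (1 / 16) := by
  induction k with
  | zero => norm_num [eulerCoeff]
  | succ k ih =>
    obtain ⟨h0, h1⟩ := ih
    have hk : (0 : ℝ) ≤ k := k.cast_nonneg
    have hnum : 0 ≤ (4 * ((k : ℝ) + 1) - 1) * (4 * ((k : ℝ) + 1) + 1) := by nlinarith
    rw [eulerCoeff]
    constructor
    · positivity
    · rw [div_le_iff₀ (by positivity)]
      nlinarith

noncomputable def eulerSeriesCoeff : ℕ → ℝ
  | 0 => 1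
  | k + 1 => -eulerCoeff (k + 1)

theorem abs_eulerSeriesCoeff_le_one (n : ℕ) : |eulerSeriesCoeff n| ≤ 1 := by
  rcases n with _ | k
  · simp [eulerSeriesCoeff]
  · obtain ⟨h0, h1⟩ := eulerCoeff_succ_mem_Icc k
    rw [eulerSeriesCoeff, abs_neg, abs_of_nonneg h0]
    linarith

theorem eulerSeriesCoeff_succ (n : ℕ) :
    (n + 1) * (n + 1) * eulerSeriesCoeff (n + 1) =
      (n + -1 / 4) * (n + 1 / 4) * eulerSeriesCoeff n := by
  rcases n with _ | k
  · norm_num [eulerSeriesCoeff, eulerCoeff]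
  · rw [eulerSeriesCoeff, eulerSeriesCoeff, eulerCoeff]
    push_cast
    field_simp
    ring

theorem absSummableOnUnitInterval_eulerSeriesCoeff :
    AbsSummableOnUnitInterval eulerSeriesCoeff :=
  .of_abs_le abs_eulerSeriesCoeff_le_one

theorem eulerSeries_eq_tsum {x : ℝ} (hx : |x| < 1) :
    eulerSeries x = ∑' n, eulerSeriesCoeff n * (x ^ 2) ^ n := by
  have hx2 : |x ^ 2| < 1 := by rwa [abs_sq, sq_lt_one_iff_abs_lt_one]
  rw [(absSummableOnUnitInterval_eulerSeriesCoeff.summable hx2).tsum_eq_zero_add, eulerSeries]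
  simp [eulerSeriesCoeff, ← pow_mul, tsum_neg, sub_eq_add_neg]

theorem hasDerivAt_eulerSeries {x : ℝ} (hx : |x| < 1) :
    HasDerivAt eulerSeries (2 * x * ∑' n, derivCoeff eulerSeriesCoeff n * (x ^ 2) ^ n) x := by
  have hx2 : |x ^ 2| < 1 := by rwa [abs_sq, sq_lt_one_iff_abs_lt_one]
  have hcomp := (absSummableOnUnitInterval_eulerSeriesCoeff.hasDerivAt_tsum hx2).comp x
    (h := fun y => y ^ 2) (hasDerivAt_pow 2 x)
  refine (hcomp.congr_deriv (by push_cast; ring)).congr_of_eventuallyEq ?_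
  filter_upwards [isOpen_Ioo.mem_nhds (abs_lt.mp hx)] with y hy
  exact eulerSeries_eq_tsum (abs_lt.mpr hy)

theorem hasDerivAt_deriv_eulerSeries {x : ℝ} (hx : |x| < 1) :
    HasDerivAt (deriv eulerSeries)
      (2 * ∑' n, derivCoeff eulerSeriesCoeff n * (x ^ 2) ^ n +
        4 * x ^ 2 * ∑' n, derivCoeff (derivCoeff eulerSeriesCoeff) n * (x ^ 2) ^ n) x := by
  have hx2 : |x ^ 2| < 1 := by rwa [abs_sq, sq_lt_one_iff_abs_lt_one]
  have hcomp := (absSummableOnUnitInterval_eulerSeriesCoeff.derivCoeff.hasDerivAt_tsum hx2).comp x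
    (h := fun y => y ^ 2) (hasDerivAt_pow 2 x)
  refine ((((hasDerivAt_id x).const_mul 2).mul hcomp).congr_deriv
    (by simp only [Function.comp_apply, id]; push_cast; ring)).congr_of_eventuallyEq ?_
  filter_upwards [isOpen_Ioo.mem_nhds (abs_lt.mp hx)] with y hy
  exact (hasDerivAt_eulerSeries (abs_lt.mpr hy)).deriv

/-- E563 §6: Euler's perimeter series is twice differentiable on `(−1,1)` and
satisfies the differential equation `4x·s''(x) + 4·s'(x) + x·s(x)/(1−x²) = 0`. -/
theorem euler_series_differential_equation :
    ∀ x ∈ Set.Ioo (-1 : ℝ) 1,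
      DifferentiableAt ℝ eulerSeries x ∧
      DifferentiableAt ℝ (deriv eulerSeries) x ∧
      4 * x * deriv (deriv eulerSeries) x + 4 * deriv eulerSeries x
        + x * eulerSeries x / (1 - x ^ 2) = 0 := by
  intro x hx
  have hx' : |x| < 1 := abs_lt.mpr hx
  have hsq : x ^ 2 < 1 := (sq_lt_one_iff_abs_lt_one x).mpr hx'
  have hx2 : |x ^ 2| < 1 := by rwa [abs_sq]
  have hs := hasDerivAt_eulerSeries hx'
  have hs' := hasDerivAt_deriv_eulerSeries hx'
  refine ⟨hs.differentiableAt, hs'.differentiableAt, ?_⟩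
  have ha := absSummableOnUnitInterval_eulerSeriesCoeff
  have hode := hypergeometric_ode_of_hasSum eulerSeriesCoeff_succ (ha.summable hx2).hasSum
    (ha.derivCoeff.summable hx2).hasSum (ha.derivCoeff.derivCoeff.summable hx2).hasSum
  have hx1 : 1 - x ^ 2 ≠ 0 := (sub_pos.mpr hsq).ne'
  rw [hs'.deriv, hs.deriv, eulerSeries_eq_tsum hx']
  field_simp
  linear_combination 16 * x * hode
end

section
/- Appendix Lemma 5 (blow-up at a parabolic limiting conic): let A, C, D, E, F be real with A < 0, C < 0 (so A·C > 0), and suppose C·D² + A·E² − 2·√(A·C)·D·E ≠ 0 (equivalently D·√(−C) + E·√(−A) ≠ 0, i.e. the limiting conic at B = √(A·C) is a parabola rather than a pair of parallel lines). For B² > A·C define H(B) = (C·D² + A·E² − 2·B·D·E + F·(B² − A·C))/(B² − A·C)^{3/2}. Then H(B) → −∞ as B → √(A·C) from above. -/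
open Filter Topology

/-- Appendix Lemma 5: with `A < 0`, `C < 0` and
`CD² + AE² − 2√(AC)·DE ≠ 0` (the limiting conic at `B = √(AC)` is a parabola),
the continued area function `H(B) = (CD² + AE² − 2BDE + F(B²−AC))/(B²−AC)^{3/2}`
tends to `−∞` as `B → √(AC)` from above. -/
theorem euler_area_blowup_at_parabola (A C D E F : ℝ)
    (hA : A < 0) (hC : C < 0)
    (hpar : C * D ^ 2 + A * E ^ 2 - 2 * Real.sqrt (A * C) * D * E ≠ 0) :
    Filter.Tendsto
      (fun B : ℝ => (C * D ^ 2 + A * E ^ 2 - 2 * B * D * E + F * (B ^ 2 - A * C))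
        / (B ^ 2 - A * C) ^ ((3 : ℝ) / 2))
      (𝓝[>] Real.sqrt (A * C)) Filter.atBot := by
  set s := Real.sqrt (A * C) with hs
  have hAC : 0 < A * C := mul_pos_of_neg_of_neg hA hC
  have hs0 : 0 ≤ s := Real.sqrt_nonneg _
  have hs2 : s ^ 2 = A * C := Real.sq_sqrt hAC.le
  have hsplit : s = Real.sqrt (-A) * Real.sqrt (-C) := by
    rw [hs, show A * C = (-A) * (-C) by ring,
      Real.sqrt_mul (by linarith : (0:ℝ) ≤ -A)]
  set L := C * D ^ 2 + A * E ^ 2 - 2 * s * D * E with hL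
  have hLneg : L < 0 := by
    have h1 : Real.sqrt (-C) ^ 2 = -C := Real.sq_sqrt (by linarith)
    have h2 : Real.sqrt (-A) ^ 2 = -A := Real.sq_sqrt (by linarith)
    have hkey : L = -(D * Real.sqrt (-C) + E * Real.sqrt (-A)) ^ 2 := by
      rw [hL, hsplit]
      linear_combination D ^ 2 * h1 + E ^ 2 * h2
    have hsq := sq_nonneg (D * Real.sqrt (-C) + E * Real.sqrt (-A))
    rcases lt_or_eq_of_le (by linarith : L ≤ 0) with h | h
    · exact h
    · exact absurd h hpar
  -- numerator tends to L
  have h_num : Tendsto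
      (fun B : ℝ => C * D ^ 2 + A * E ^ 2 - 2 * B * D * E + F * (B ^ 2 - A * C))
      (𝓝[>] s) (𝓝 L) := by
    have hc : Continuous
        (fun B : ℝ => C * D ^ 2 + A * E ^ 2 - 2 * B * D * E + F * (B ^ 2 - A * C)) := by
      continuity
    have := (hc.tendsto s).mono_left (nhdsWithin_le_nhds (s := Set.Ioi s))
    convert this using 2
    rw [hL]
    have : s ^ 2 - A * C = 0 := by rw [hs2]; ring
    rw [this]; ring
  -- (B^2 - A*C) tends to 0 from above
  have h_q : Tendsto (fun B : ℝ => B ^ 2 - A * C) (𝓝[>] s) (𝓝[>] (0 : ℝ)) := by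
    apply tendsto_nhdsWithin_of_tendsto_nhds_of_eventually_within
    · have hc : Continuous (fun B : ℝ => B ^ 2 - A * C) := by continuity
      have := (hc.tendsto s).mono_left (nhdsWithin_le_nhds (s := Set.Ioi s))
      simpa [hs2] using this
    · filter_upwards [self_mem_nhdsWithin] with B hB
      have hB : s < B := hB
      have : s ^ 2 < B ^ 2 := by nlinarith
      simp only [Set.mem_Ioi]
      nlinarith [hs2]
  -- rpow tends to 0 from above
  have h_rpow : Tendsto (fun x : ℝ => x ^ ((3 : ℝ) / 2)) (𝓝[>] (0 : ℝ)) (𝓝[>] (0 : ℝ)) := by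
    apply tendsto_nhdsWithin_of_tendsto_nhds_of_eventually_within
    · have hc : ContinuousAt (fun x : ℝ => x ^ ((3 : ℝ) / 2)) 0 :=
        Real.continuousAt_rpow_const 0 _ (Or.inr (by norm_num))
      have := hc.tendsto.mono_left (nhdsWithin_le_nhds (s := Set.Ioi (0 : ℝ)))
      simpa [Real.zero_rpow (by norm_num : (3 : ℝ) / 2 ≠ 0)] using this
    · filter_upwards [self_mem_nhdsWithin] with x hx
      exact Real.rpow_pos_of_pos hx _
  have h_den : Tendsto (fun B : ℝ => ((B ^ 2 - A * C) ^ ((3 : ℝ) / 2))⁻¹)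
      (𝓝[>] s) atTop :=
    tendsto_inv_nhdsGT_zero.comp (h_rpow.comp h_q)
  have := Filter.Tendsto.neg_mul_atTop hLneg h_num h_den
  simpa [div_eq_mul_inv] using this
end

section
/- Critical conics for a kite: let a > 0, b < 0, c > 0 and set d = −c, A = c·d = −c², C = a·b, D = −c·d·(a+b)/2 = c²·(a+b)/2, E = −a·b·(c+d)/2 = 0, F = a·b·c·d = −a·b·c². Then the real roots of Euler's cubic F·B³ − 4·D·E·B² + (3·C·D² + 3·A·E² − A·C·F)·B − 2·A·C·D·E are exactly B = 0 and B = ±(c/2)·√(3·a² + 3·b² + 2·a·b); moreover each nonzero root satisfies B² ≥ A·C, with equality if and only if b = −a, because B² − A·C = (3·c²/4)·(a + b)². -/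
/-- Appendix A.6 (kites): for a kite with vertices `(a,0)`, `(b,0)`, `(0,c)`,
`(0,−c)` (with `a > 0 > b`, `c > 0`), so that `A = −c²`, `C = ab`,
`D = c²(a+b)/2`, `E = 0`, `F = −abc²`, the roots of Euler's cubic are exactly
`B = 0` and `B = ±(c/2)·√(3a² + 3b² + 2ab)`; moreover for the nonzero roots
`B² − AC = (3c²/4)(a+b)² ≥ 0`, with `B² = AC` iff `b = −a`. -/
theorem euler_cubic_kite_roots (a b c d A C D E F : ℝ)
    (ha : 0 < a) (hb : b < 0) (hc : 0 < c) (hd : d = -c)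
    (hA : A = c * d) (hC : C = a * b)
    (hD : D = -(c * d * (a + b)) / 2) (hE : E = -(a * b * (c + d)) / 2)
    (hF : F = a * b * c * d) :
    (∀ B : ℝ,
      F * B ^ 3 - 4 * D * E * B ^ 2
          + (3 * C * D ^ 2 + 3 * A * E ^ 2 - A * C * F) * B - 2 * A * C * D * E = 0 ↔
        B = 0 ∨ B = c / 2 * Real.sqrt (3 * a ^ 2 + 3 * b ^ 2 + 2 * a * b) ∨
          B = -(c / 2 * Real.sqrt (3 * a ^ 2 + 3 * b ^ 2 + 2 * a * b))) ∧
    (c / 2 * Real.sqrt (3 * a ^ 2 + 3 * b ^ 2 + 2 * a * b)) ^ 2 - A * C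
      = 3 * c ^ 2 / 4 * (a + b) ^ 2 ∧
    A * C ≤ (c / 2 * Real.sqrt (3 * a ^ 2 + 3 * b ^ 2 + 2 * a * b)) ^ 2 ∧
    ((c / 2 * Real.sqrt (3 * a ^ 2 + 3 * b ^ 2 + 2 * a * b)) ^ 2 = A * C ↔ b = -a) := by
  subst hd hA hC hD hE hF
  have hab : a * b < 0 := mul_neg_of_pos_of_neg ha hb
  have hs0 : (0:ℝ) ≤ 3 * a ^ 2 + 3 * b ^ 2 + 2 * a * b := by
    nlinarith [sq_nonneg (a + b)]
  have hr : (Real.sqrt (3 * a ^ 2 + 3 * b ^ 2 + 2 * a * b)) ^ 2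
      = 3 * a ^ 2 + 3 * b ^ 2 + 2 * a * b := Real.sq_sqrt hs0
  set r := Real.sqrt (3 * a ^ 2 + 3 * b ^ 2 + 2 * a * b) with hrdef
  have hne : a * b * c ^ 2 ≠ 0 :=
    ne_of_lt (mul_neg_of_neg_of_pos hab (by positivity))
  refine ⟨?_, ?_, ?_, ?_⟩
  · intro B
    constructor
    · intro h
      have key : (a * b * c ^ 2) * (B * ((B - c / 2 * r) * (B + c / 2 * r))) = 0 := by
        linear_combination -h - (a * b * c ^ 4 * B / 4) * hr
      have := mul_eq_zero.mp key
      rcases this with h1 | h2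
      · exact absurd h1 hne
      · rcases mul_eq_zero.mp h2 with h3 | h4
        · exact Or.inl h3
        · rcases mul_eq_zero.mp h4 with h5 | h6
          · exact Or.inr (Or.inl (by linarith))
          · exact Or.inr (Or.inr (by linarith))
    · rintro (rfl | rfl | rfl)
      · ring
      · linear_combination (-(a * b * c ^ 5 * r) / 8) * hr
      · linear_combination (a * b * c ^ 5 * r / 8) * hr
  · linear_combination (c ^ 2 / 4) * hr
  · nlinarith [sq_nonneg (a + b), hr, sq_nonneg c]
  · constructor
    · intro h
      have : 3 * c ^ 2 / 4 * (a + b) ^ 2 = 0 := by linear_combination h - (c ^ 2 / 4) * hr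
      have hab0 : (a + b) ^ 2 = 0 := by
        have hc2 : (0:ℝ) < 3 * c ^ 2 / 4 := by positivity
        nlinarith [sq_nonneg (a + b)]
      have := pow_eq_zero_iff (n := 2) (by norm_num) |>.mp hab0
      linarith
    · intro h
      subst h
      linear_combination (c ^ 2 / 4) * hr
end
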